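/- One coordinate-wise integrator step with Laplace momentum coincides with a Metropolis step: fix θ ∈ ℝ^d, an index j, a mass m > 0, a stepsize ε > 0, and a measurable potential U : ℝ^d → ℝ. Let μ be the Laplace distribution with scale m on ℝ, and define T : ℝ → ℝ^d by T(p) = θ + ε m⁻¹ sign(p) e_j if m⁻¹|p| > U(θ + ε m⁻¹ sign(p) e_j) − U(θ), and T(p) = θ otherwise. Writing θ_± = θ ± ε m⁻¹ e_j, Δ_± = U(θ_±) − U(θ) and a_± = min(1, exp(−Δ_±)), the pushforward of μ under T equals (a_+/2) δ_{θ_+} + (a_−/2) δ_{θ_−} + (1 − a_+/2 − a_−/2) δ_θ. -/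

import Mathlib

/-!
Since `sign p` fixes the direction of the move, the step `T` sends `p` to `θ₊` exactly when
`p > m max(0, Δ₊)`, to `θ₋` exactly when `p < -m max(0, Δ₋)`, and to `θ` otherwise. The Laplace
tail beyond `m c` (for `c ≥ 0`) has mass `exp(-c)/2`, and `exp(-max(0, Δ)) = min(1, exp(-Δ))` is
the Metropolis acceptance probability.
-/

open MeasureTheory Set

noncomputable def laplaceMeasure (m : ℝ) : Measure ℝ :=
  volume.withDensity fun p => ENNReal.ofReal ((2 * m)⁻¹ * Real.exp (-|p| / m))

section Laplace

variable {m : ℝ}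

theorem laplaceMeasure_Ioi_mul (hm : 0 < m) {c : ℝ} (hc : 0 ≤ c) :
    laplaceMeasure m (Ioi (m * c)) = ENNReal.ofReal (Real.exp (-c) / 2) := by
  have hdensity : ∀ p ∈ Ioi (m * c), ENNReal.ofReal ((2 * m)⁻¹ * Real.exp (-|p| / m))
      = ENNReal.ofReal ((2 * m)⁻¹ * Real.exp (-m⁻¹ * p)) := fun p hp => by
    rw [abs_of_pos ((mul_nonneg hm.le hc).trans_lt hp), neg_div, div_eq_inv_mul, neg_mul]
  have hint : ∫ p in Ioi (m * c), Real.exp (-m⁻¹ * p) = m * Real.exp (-c) := by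
    have := integral_comp_mul_left_Ioi (fun x => Real.exp (-m⁻¹ * x)) c hm
    simp only [← mul_assoc, neg_mul, inv_mul_cancel₀ hm.ne', one_mul, integral_exp_neg_Ioi,
      smul_eq_mul] at this
    rw [this, mul_inv_cancel_left₀ hm.ne']
    simp only [neg_mul]
  rw [laplaceMeasure, withDensity_apply _ measurableSet_Ioi,
    setLIntegral_congr_fun measurableSet_Ioi hdensity,
    ← ofReal_integral_eq_lintegral_ofReal
      ((exp_neg_integrableOn_Ioi _ (inv_pos.2 hm)).const_mul _)
      (Filter.Eventually.of_forall fun p => by positivity),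
    integral_const_mul, hint]
  congr 1
  field_simp

theorem laplaceMeasure_Iio_neg (c : ℝ) :
    laplaceMeasure m (Iio (-c)) = laplaceMeasure m (Ioi c) := by
  have hneg := (Measure.measurePreserving_neg (volume : Measure ℝ)).setLIntegral_comp_preimage_emb
    (MeasurableEquiv.neg ℝ).measurableEmbedding
    (fun p => ENNReal.ofReal ((2 * m)⁻¹ * Real.exp (-|p| / m))) (Ioi c)
  simp only [abs_neg] at hneg
  rw [laplaceMeasure, withDensity_apply _ measurableSet_Iio, withDensity_apply _ measurableSet_Ioi,
    ← hneg, ← neg_Ioi]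
  rfl

instance nullSingletonClass_laplaceMeasure : NullSingletonClass (laplaceMeasure m) := by
  unfold laplaceMeasure; infer_instance

theorem isProbabilityMeasure_laplaceMeasure (hm : 0 < m) :
    IsProbabilityMeasure (laplaceMeasure m) := by
  constructor
  have hhalf : laplaceMeasure m (Ioi 0) = ENNReal.ofReal (1 / 2) := by
    simpa using laplaceMeasure_Ioi_mul hm le_rfl
  rw [← Iio_union_Ici (a := 0), measure_union (Iio_disjoint_Ici le_rfl) measurableSet_Ici,
    ← measure_congr Ioi_ae_eq_Ici, ← neg_zero, laplaceMeasure_Iio_neg, neg_zero, hhalf,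
    ← ENNReal.ofReal_add (by norm_num) (by norm_num)]
  norm_num

end Laplace

namespace MeasureTheory.Measure

variable {α β : Type*} [MeasurableSpace α] [MeasurableSpace β]

theorem map_restrict_of_eqOn_const (μ : Measure α) {s : Set α} (hs : MeasurableSet s) {f : α → β}
    {c : β} (hf : EqOn f (fun _ => c) s) : (μ.restrict s).map f = μ s • dirac c := by
  rw [map_congr (ae_restrict_of_forall_mem hs hf), map_const, restrict_apply_univ]

theorem map_ite_ite_eq_add_dirac (μ : Measure α) [IsProbabilityMeasure μ] {A B : Set α}
    [DecidablePred (· ∈ A)] [DecidablePred (· ∈ B)] (hA : MeasurableSet A) (hB : MeasurableSet B)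
    (hAB : Disjoint A B) (x y z : β) :
    μ.map (fun p => if p ∈ A then x else if p ∈ B then y else z)
      = μ A • dirac x + μ B • dirac y + (1 - μ A - μ B) • dirac z := by
  have hf : Measurable fun p => if p ∈ A then x else if p ∈ B then y else z :=
    measurable_const.ite hA (measurable_const.ite hB measurable_const)
  have hsplit : μ = μ.restrict A + μ.restrict B + μ.restrict (A ∪ B)ᶜ := by
    rw [← restrict_union hAB hB, restrict_add_restrict_compl (hA.union hB)]
  conv_lhs => rw [hsplit]
  rw [Measure.map_add _ _ hf, Measure.map_add _ _ hf,
    map_restrict_of_eqOn_const μ hA fun p hp => if_pos hp,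
    map_restrict_of_eqOn_const μ hB (c := y) fun p hp => by
      simp only [if_neg (hAB.notMem_of_mem_right hp), if_pos hp],
    map_restrict_of_eqOn_const μ (hA.union hB).compl (c := z) fun p hp => by
      rw [mem_compl_iff, mem_union, not_or] at hp
      simp only [if_neg hp.1, if_neg hp.2],
    prob_compl_eq_one_sub (hA.union hB), measure_union hAB hB, tsub_tsub]

end MeasureTheory.Measure

theorem mul_max_zero_lt_iff {m q : ℝ} (Δ : ℝ) (hm : 0 < m) (hq : 0 < q) :
    m * max 0 Δ < q ↔ Δ < m⁻¹ * q := by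
  rw [mul_max_of_nonneg _ _ hm.le, mul_zero, max_lt_iff, lt_inv_mul_iff₀ hm]
  exact and_iff_right hq

theorem coordStep_eq_ite {E : Type*} [AddCommGroup E] [Module ℝ E] (U : E → ℝ) (θ v : E)
    {m : ℝ} (hm : 0 < m) (a : ℝ) :
    (fun p : ℝ => if m⁻¹ * |p| > U (θ + (a * Real.sign p) • v) - U θ then
        θ + (a * Real.sign p) • v else θ)
      = fun p => if p ∈ Ioi (m * max 0 (U (θ + a • v) - U θ)) then θ + a • v
          else if p ∈ Iio (-(m * max 0 (U (θ - a • v) - U θ))) then θ - a • v else θ := by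
  have hp_nonneg : 0 ≤ m * max 0 (U (θ + a • v) - U θ) := by positivity
  have hm_nonneg : 0 ≤ m * max 0 (U (θ - a • v) - U θ) := by positivity
  funext p
  simp only [mem_Ioi, mem_Iio, gt_iff_lt]
  rcases lt_trichotomy p 0 with hp | rfl | hp
  · simp only [Real.sign_of_neg hp, abs_of_neg hp, mul_neg_one, neg_smul, ← sub_eq_add_neg,
      if_neg (not_lt.2 (hp.le.trans hp_nonneg)), lt_neg (b := m * _),
      mul_max_zero_lt_iff _ hm (neg_pos.2 hp)]
  · simp [not_lt.2 hp_nonneg, not_lt.2 hm_nonneg]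
  · simp only [Real.sign_of_pos hp, abs_of_pos hp, mul_one, mul_max_zero_lt_iff _ hm hp,
      if_neg (not_lt.2 ((neg_nonpos.2 hm_nonneg).trans hp.le))]

theorem Real.exp_neg_max_zero (Δ : ℝ) : Real.exp (-max 0 Δ) = min 1 (Real.exp (-Δ)) := by
  rw [← min_neg_neg, neg_zero, Real.exp_monotone.map_min, Real.exp_zero]

theorem coordIntegrator_step_eq_metropolis_general
    (d : ℕ) (j : Fin d) (m ε : ℝ) (hm : 0 < m)
    (θ : Fin d → ℝ) (U : (Fin d → ℝ) → ℝ) :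
    let μ : Measure ℝ :=
      volume.withDensity fun p => ENNReal.ofReal ((2 * m)⁻¹ * Real.exp (-|p| / m))
    let T : ℝ → Fin d → ℝ := fun p =>
      if m⁻¹ * |p| >
          U (θ + (ε * m⁻¹ * Real.sign p) • (Pi.single j 1 : Fin d → ℝ)) - U θ then
        θ + (ε * m⁻¹ * Real.sign p) • (Pi.single j 1 : Fin d → ℝ)
      else θ
    let θp : Fin d → ℝ := θ + (ε * m⁻¹) • (Pi.single j 1 : Fin d → ℝ)
    let θm : Fin d → ℝ := θ - (ε * m⁻¹) • (Pi.single j 1 : Fin d → ℝ)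
    let ap : ℝ := min 1 (Real.exp (-(U θp - U θ)))
    let am : ℝ := min 1 (Real.exp (-(U θm - U θ)))
    μ.map T
      = ENNReal.ofReal (ap / 2) • Measure.dirac θp
        + ENNReal.ofReal (am / 2) • Measure.dirac θm
        + ENNReal.ofReal (1 - ap / 2 - am / 2) • Measure.dirac θ := by
  intro μ T θp θm ap am
  have : IsProbabilityMeasure μ := isProbabilityMeasure_laplaceMeasure hm
  have hT : T = _ := coordStep_eq_ite U θ (Pi.single j 1) hm (ε * m⁻¹)
  have hap : μ (Ioi (m * max 0 (U θp - U θ))) = ENNReal.ofReal (ap / 2) := by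
    have := laplaceMeasure_Ioi_mul hm (le_max_left 0 (U θp - U θ))
    rwa [Real.exp_neg_max_zero] at this
  have ham : μ (Iio (-(m * max 0 (U θm - U θ)))) = ENNReal.ofReal (am / 2) := by
    have := laplaceMeasure_Ioi_mul hm (le_max_left 0 (U θm - U θ))
    rwa [Real.exp_neg_max_zero, ← laplaceMeasure_Iio_neg] at this
  have hdisj : Disjoint (Ioi (m * max 0 (U θp - U θ))) (Iio (-(m * max 0 (U θm - U θ)))) :=
    Ioi_disjoint_Iio_of_le ((neg_nonpos.2 (by positivity)).trans (by positivity))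
  have hap_nonneg : 0 ≤ ap / 2 := by positivity
  have ham_nonneg : 0 ≤ am / 2 := by positivity
  rw [hT, Measure.map_ite_ite_eq_add_dirac μ measurableSet_Ioi measurableSet_Iio hdisj, hap, ham,
    ENNReal.ofReal_sub _ ham_nonneg, ENNReal.ofReal_sub _ hap_nonneg, ENNReal.ofReal_one]

/-- One coordinate-wise integrator step with Laplace momentum coincides with a
Metropolis step: the pushforward of the Laplace distribution with scale `m`
under the map `T` (sending `p` to `θ + ε m⁻¹ sign(p) eⱼ` if
`m⁻¹|p| > U(θ + ε m⁻¹ sign(p) eⱼ) − U(θ)` and to `θ` otherwise) equals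
`(a₊/2) δ_{θ₊} + (a₋/2) δ_{θ₋} + (1 − a₊/2 − a₋/2) δ_θ`, where
`θ_± = θ ± ε m⁻¹ eⱼ`, `Δ_± = U(θ_±) − U(θ)` and `a_± = min(1, exp(−Δ_±))`. -/
theorem coordIntegrator_step_eq_metropolis
    (d : ℕ) (hd : 1 ≤ d) (j : Fin d) (m ε : ℝ) (hm : 0 < m) (hε : 0 < ε)
    (θ : Fin d → ℝ) (U : (Fin d → ℝ) → ℝ) (hU : Measurable U) :
    let μ : Measure ℝ :=
      volume.withDensity fun p => ENNReal.ofReal ((2 * m)⁻¹ * Real.exp (-|p| / m))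
    let T : ℝ → Fin d → ℝ := fun p =>
      if m⁻¹ * |p| >
          U (θ + (ε * m⁻¹ * Real.sign p) • (Pi.single j 1 : Fin d → ℝ)) - U θ then
        θ + (ε * m⁻¹ * Real.sign p) • (Pi.single j 1 : Fin d → ℝ)
      else θ
    let θp : Fin d → ℝ := θ + (ε * m⁻¹) • (Pi.single j 1 : Fin d → ℝ)
    let θm : Fin d → ℝ := θ - (ε * m⁻¹) • (Pi.single j 1 : Fin d → ℝ)
    let ap : ℝ := min 1 (Real.exp (-(U θp - U θ)))
    let am : ℝ := min 1 (Real.exp (-(U θm - U θ)))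
    μ.map T
      = ENNReal.ofReal (ap / 2) • Measure.dirac θp
        + ENNReal.ofReal (am / 2) • Measure.dirac θm
        + ENNReal.ofReal (1 - ap / 2 - am / 2) • Measure.dirac θ :=
  coordIntegrator_step_eq_metropolis_general d j m ε hm θ U
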